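/- arXiv:2005.11309 — 9 statements merged into one kernel-verified Lean document; each statement's English description precedes it below -/
import Mathlib

section
/- In a pre-abelian category, if cokernels are stable under pullback (left quasi-abelian), then every morphism f can be factored as f = i ∘ p where i is a monomorphism and p is a cokernel (left semi-abelian). -/
open CategoryTheory CategoryTheory.Limits

universe v u

/-- A morphism is a *cokernel* if it arises as the cokernel of some morphism. -/
def IsCokernelMorphism {C : Type u} [Category.{v} C] [HasZeroMorphisms C]
    {X Y : C} (f : X ⟶ Y) : Prop :=
  ∃ (W : C) (g : W ⟶ X) (w : g ≫ f = 0), Nonempty (IsColimit (CokernelCofork.ofπ f w))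

/-- In a pre-abelian category, if cokernels are stable under pullback (left quasi-abelian),
then every morphism factors as a cokernel followed by a monomorphism (left semi-abelian). -/
theorem stmt0 {C : Type u} [Category.{v} C] [Preadditive C] [HasFiniteBiproducts C]
    [HasKernels C] [HasCokernels C]
    (hLQA : ∀ ⦃A B C' D : C⦄ (a : A ⟶ B) (b : A ⟶ C') (c : B ⟶ D) (d : C' ⟶ D),
      IsPullback a b c d → IsCokernelMorphism d → IsCokernelMorphism a) :
    ∀ ⦃X Y : C⦄ (f : X ⟶ Y), ∃ (Z : C) (p : X ⟶ Z) (i : Z ⟶ Y),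
      IsCokernelMorphism p ∧ Mono i ∧ p ≫ i = f := by
  haveI : HasEqualizers C := Preadditive.hasEqualizers_of_hasKernels
  haveI : HasFiniteLimits C := Limits.hasFiniteLimits_of_hasEqualizers_and_finite_products
  intro X Y f
  refine ⟨cokernel (kernel.ι f), cokernel.π _, cokernel.desc _ f (kernel.condition f),
    ⟨kernel f, kernel.ι f, cokernel.condition _, ⟨cokernelIsCokernel _⟩⟩, ?_,
    cokernel.π_desc _ _ _⟩
  set p : X ⟶ cokernel (kernel.ι f) := cokernel.π (kernel.ι f)
  set i : cokernel (kernel.ι f) ⟶ Y := cokernel.desc _ f (kernel.condition f)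
  set k : kernel i ⟶ cokernel (kernel.ι f) := kernel.ι i
  have hpb : IsPullback (pullback.fst k p) (pullback.snd k p) k p :=
    IsPullback.of_hasPullback k p
  have hcok : IsCokernelMorphism (pullback.fst k p) :=
    hLQA _ _ _ _ hpb ⟨kernel f, kernel.ι f, cokernel.condition _, ⟨cokernelIsCokernel _⟩⟩
  have hepi : Epi (pullback.fst k p) := by
    obtain ⟨W, g, w, ⟨hc⟩⟩ := hcok
    exact epi_of_isColimit_cofork hc
  -- snd ≫ f = 0, so snd factors through kernel f
  have hsndf : pullback.snd k p ≫ f = 0 := by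
    have h1 : pullback.snd k p ≫ p ≫ i = pullback.fst k p ≫ k ≫ i := by
      rw [← Category.assoc, ← pullback.condition, Category.assoc]
    have h2 : p ≫ i = f := cokernel.π_desc _ _ _
    have h3 : k ≫ i = 0 := kernel.condition i
    rw [h2, h3, comp_zero] at h1
    exact h1
  have hfactor : kernel.lift f (pullback.snd k p) hsndf ≫ kernel.ι f = pullback.snd k p :=
    kernel.lift_ι _ _ _
  have hk0 : pullback.fst k p ≫ k = 0 := by
    rw [pullback.condition, ← hfactor, Category.assoc]
    simp [p, cokernel.condition]
  have : k = 0 := by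
    rw [← cancel_epi (pullback.fst k p), comp_zero]
    exact hk0
  exact Preadditive.mono_of_kernel_zero this
end

section
/- In a pre-abelian category, if epimorphisms are stable under pullback (left integral), then every morphism f can be factored as f = i ∘ p where i is a monomorphism and p is a cokernel (left semi-abelian). -/
open CategoryTheory CategoryTheory.Limits

universe v u

/-- In a pre-abelian category, if epimorphisms are stable under pullback (left integral),
then every morphism factors as a cokernel followed by a monomorphism (left semi-abelian). -/
theorem stmt1 {C : Type u} [Category.{v} C] [Preadditive C] [HasFiniteBiproducts C]
    [HasKernels C] [HasCokernels C]
    (hLI : ∀ ⦃A B C' D : C⦄ (a : A ⟶ B) (b : A ⟶ C') (c : B ⟶ D) (d : C' ⟶ D),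
      IsPullback a b c d → Epi d → Epi a) :
    ∀ ⦃X Y : C⦄ (f : X ⟶ Y), ∃ (Z : C) (p : X ⟶ Z) (i : Z ⟶ Y),
      IsCokernelMorphism p ∧ Mono i ∧ p ≫ i = f := by
  haveI : HasEqualizers C := Preadditive.hasEqualizers_of_hasKernels
  haveI : HasPullbacks C := hasPullbacks_of_hasBinaryProducts_of_hasEqualizers C
  intro X Y f
  refine ⟨cokernel (kernel.ι f), cokernel.π _, cokernel.desc _ f (kernel.condition f),
    ⟨kernel f, kernel.ι f, cokernel.condition _, ⟨cokernelIsCokernel _⟩⟩, ?_,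
    cokernel.π_desc _ _ _⟩
  apply Preadditive.mono_of_cancel_zero
  intro T u hu
  have hsq := IsPullback.of_hasPullback u (cokernel.π (kernel.ι f))
  haveI : Epi (pullback.fst u (cokernel.π (kernel.ι f))) :=
    hLI _ _ _ _ hsq inferInstance
  have h0 : pullback.snd u (cokernel.π (kernel.ι f)) ≫ f = 0 := by
    have : pullback.snd u (cokernel.π (kernel.ι f)) ≫ f
        = pullback.fst u (cokernel.π (kernel.ι f)) ≫ u ≫ cokernel.desc _ f (kernel.condition f) := by
      conv_rhs => rw [← Category.assoc, pullback.condition, Category.assoc,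
        cokernel.π_desc]
    rw [this, hu, comp_zero]
  have hfac : pullback.snd u (cokernel.π (kernel.ι f))
      = kernel.lift f _ h0 ≫ kernel.ι f := (kernel.lift_ι f _ h0).symm
  have : pullback.fst u (cokernel.π (kernel.ι f)) ≫ u = 0 := by
    rw [pullback.condition, hfac, Category.assoc, cokernel.condition, comp_zero]
  have := this.trans (comp_zero (f := pullback.fst u (cokernel.π (kernel.ι f)))).symm
  exact (cancel_epi _).mp this
end

section
/- In a semi-abelian category, cokernels are stable under pullback if and only if kernels are stable under pushout; i.e., left quasi-abelian is equivalent to right quasi-abelian. -/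
open CategoryTheory CategoryTheory.Limits

universe v u

/-- A morphism is a *kernel* if it arises as the kernel of some morphism. -/
def IsKernelMorphism {C : Type u} [Category.{v} C] [HasZeroMorphisms C]
    {X Y : C} (f : X ⟶ Y) : Prop :=
  ∃ (W : C) (g : Y ⟶ W) (w : f ≫ g = 0), Nonempty (IsLimit (KernelFork.ofι f w))

section Aux

variable {C : Type u} [Category.{v} C] [Preadditive C] [HasFiniteBiproducts C]
    [HasKernels C] [HasCokernels C]

theorem left_to_right_aux
    (hSemi : ∀ ⦃X Y : C⦄ (f : X ⟶ Y),
      Mono (Abelian.coimageImageComparison f) ∧ Epi (Abelian.coimageImageComparison f))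
    (L : ∀ ⦃A B C' D : C⦄ (a : A ⟶ B) (b : A ⟶ C') (c : B ⟶ D) (d : C' ⟶ D),
        IsPullback a b c d → IsCokernelMorphism d → IsCokernelMorphism a)
    {A B C' D : C} (f : A ⟶ B) (g : A ⟶ C') (inl : B ⟶ D) (inr : C' ⟶ D)
    (sq : IsPushout f g inl inr) (hf : IsKernelMorphism f) : IsKernelMorphism inr := by
  haveI : HasBinaryBiproducts C := hasBinaryBiproducts_of_finite_biproducts C
  obtain ⟨Q, c, hfc, ⟨hlim⟩⟩ := hf
  have hfmono : Mono f := by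
    have := mono_of_isLimit_fork hlim
    simpa using this
  -- the canonical lift through the kernel f
  have hliftf : ∀ {T : C} (y : T ⟶ B), y ≫ c = 0 → ∃ l : T ⟶ A, l ≫ f = y := by
    intro T y hy
    obtain ⟨l, hl⟩ := KernelFork.IsLimit.lift' hlim y hy
    exact ⟨l, by simpa using hl⟩
  -- the induced map u : D ⟶ Q
  set u : D ⟶ Q := sq.desc c 0 (by rw [hfc, comp_zero]) with hu
  have hinl_u : inl ≫ u = c := sq.inl_desc _ _ _
  have hinr_u : inr ≫ u = 0 := sq.inr_desc _ _ _
  -- the kernel of u, through which inr factors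
  set k : kernel u ⟶ D := kernel.ι u with hkdef
  set e : C' ⟶ kernel u := kernel.lift u inr hinr_u with hedef
  have he_k : e ≫ k = inr := kernel.lift_ι u inr hinr_u
  have hkmono : Mono k := by rw [hkdef]; infer_instance
  have hku : k ≫ u = 0 := by rw [hkdef]; simp
  -- D is the cokernel of φ via w
  set φ : A ⟶ B ⊞ C' := biprod.lift f (-g) with hφdef
  set w : B ⊞ C' ⟶ D := biprod.desc inl inr with hwdef
  have hφw : φ ≫ w = 0 := by
    rw [hφdef, hwdef, biprod.lift_desc, sq.w]
    simp
  have hw : IsColimit (CokernelCofork.ofπ w hφw) := by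
    refine CokernelCofork.IsColimit.ofπ _ _
      (fun {T} t ht => sq.desc (biprod.inl ≫ t) (biprod.inr ≫ t) ?_) ?_ ?_
    · have h2 : φ ≫ t = 0 := ht
      rw [hφdef, biprod.lift_eq] at h2
      simp only [Preadditive.add_comp, Preadditive.neg_comp, Category.assoc] at h2
      rw [← sub_eq_zero]
      simpa [sub_eq_add_neg] using h2
    · intro T t ht
      apply biprod.hom_ext'
      · rw [hwdef]; simpa using sq.inl_desc _ _ _
      · rw [hwdef]; simpa using sq.inr_desc _ _ _
    · intro T t ht m hm
      apply sq.hom_ext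
      · rw [sq.inl_desc, ← hm, hwdef]; simp
      · rw [sq.inr_desc, ← hm, hwdef]; simp
  -- the pullback square
  set α : A ⊞ C' ⟶ B ⊞ C' := biprod.map f (𝟙 C') with hαdef
  set β : A ⊞ C' ⟶ kernel u := biprod.desc (g ≫ e) e with hβdef
  have hcomm : β ≫ k = α ≫ w := by
    apply biprod.hom_ext'
    · rw [hβdef, hαdef, hwdef]
      simp only [biprod.inl_desc_assoc, Category.assoc, he_k, biprod.inl_map_assoc,
        biprod.inl_desc]
      exact sq.w.symm
    · rw [hβdef, hαdef, hwdef]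
      simp [he_k]
  have hwu : w ≫ u = biprod.fst ≫ c := by
    apply biprod.hom_ext'
    · rw [hwdef]; simp [hinl_u]
    · rw [hwdef]; simp [hinr_u]
  have key : ∀ {T : C} (x : T ⟶ kernel u) (y : T ⟶ B ⊞ C'), x ≫ k = y ≫ w →
      (y ≫ biprod.fst) ≫ c = 0 := by
    intro T x y hxy
    have h3 : y ≫ w ≫ u = x ≫ (k ≫ u) := by
      rw [← Category.assoc, ← hxy, Category.assoc]
    rw [hwu, hku, comp_zero] at h3
    simpa using h3
  have hpb : IsPullback β α k w := by
    refine IsPullback.of_isLimit (PullbackCone.IsLimit.mk hcomm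
      (fun s => biprod.lift (hliftf (s.snd ≫ biprod.fst)
        (key s.fst s.snd s.condition)).choose (s.snd ≫ biprod.snd)) ?_ ?_ ?_)
    · intro s
      have hfr : (biprod.lift (hliftf (s.snd ≫ biprod.fst)
          (key s.fst s.snd s.condition)).choose (s.snd ≫ biprod.snd)) ≫ α = s.snd := by
        apply biprod.hom_ext
        · rw [hαdef]
          simp only [Category.assoc, biprod.map_fst, biprod.lift_fst_assoc]
          exact (hliftf (s.snd ≫ biprod.fst) (key s.fst s.snd s.condition)).choose_spec
        · rw [hαdef]; simp
      rw [← cancel_mono k, Category.assoc, hcomm, ← Category.assoc, hfr, s.condition]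
    · intro s
      apply biprod.hom_ext
      · rw [hαdef]
        simp only [Category.assoc, biprod.map_fst, biprod.lift_fst_assoc]
        exact (hliftf (s.snd ≫ biprod.fst) (key s.fst s.snd s.condition)).choose_spec
      · rw [hαdef]; simp
    · intro s m hm1 hm2
      apply biprod.hom_ext
      · rw [← cancel_mono f]
        rw [biprod.lift_fst]
        rw [(hliftf (s.snd ≫ biprod.fst) (key s.fst s.snd s.condition)).choose_spec]
        have : m ≫ α ≫ biprod.fst = s.snd ≫ biprod.fst := by rw [← Category.assoc, hm2]
        rw [hαdef, biprod.map_fst] at this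
        simpa using this
      · rw [biprod.lift_snd]
        have : m ≫ α ≫ biprod.snd = s.snd ≫ biprod.snd := by rw [← Category.assoc, hm2]
        rw [hαdef, biprod.map_snd] at this
        simpa using this
  -- β is a cokernel, by stability
  obtain ⟨W₀, h₀, hh₀, ⟨hβco⟩⟩ := L β α k w hpb ⟨A, φ, hφw, ⟨hw⟩⟩
  have hβepi : Epi β := by
    have := epi_of_isColimit_cofork hβco
    simpa using this
  -- the comparison map ρ
  set ρ : A ⟶ Abelian.image φ :=
    Abelian.coimage.π φ ≫ Abelian.coimageImageComparison φ with hρdef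
  have hρepi : Epi ρ := by
    have := (hSemi φ).2
    rw [hρdef]
    exact epi_comp _ _
  have hρι : ρ ≫ Abelian.image.ι φ = φ := by
    rw [hρdef, Category.assoc]
    exact Abelian.coimage_image_factorisation φ
  -- the map ell : image φ ⟶ A ⊞ C'
  have hιw : Abelian.image.ι φ ≫ w = 0 := by
    have h4 : w = cokernel.π φ ≫ cokernel.desc φ w hφw := (cokernel.π_desc φ w hφw).symm
    rw [h4, ← Category.assoc, kernel.condition, zero_comp]
  set ell : Abelian.image φ ⟶ A ⊞ C' :=
    hpb.lift 0 (Abelian.image.ι φ) (by rw [zero_comp, hιw]) with helldef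
  have hellβ : ell ≫ β = 0 := hpb.lift_fst _ _ _
  have hellα : ell ≫ α = Abelian.image.ι φ := hpb.lift_snd _ _ _
  -- γ
  set γ : A ⟶ A ⊞ C' := biprod.lift (𝟙 A) (-g) with hγdef
  have hγα : γ ≫ α = φ := by
    apply biprod.hom_ext
    · rw [hγdef, hαdef, hφdef]; simp
    · rw [hγdef, hαdef, hφdef]; simp
  have hγβ : γ ≫ β = 0 := by
    rw [hγdef, hβdef, biprod.lift_desc]
    simp
  have hργell : ρ ≫ ell = γ := by
    apply hpb.hom_ext
    · rw [Category.assoc, hellβ, comp_zero, hγβ]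
    · rw [Category.assoc, hellα, hρι, hγα]
  -- s'
  set s' : A ⊞ C' ⟶ C' := biprod.desc g (𝟙 C') with hs'def
  have hβse : β = s' ≫ e := by
    rw [hβdef, hs'def]
    apply biprod.hom_ext'
    · simp
    · simp
  have hells : ell ≫ s' = 0 := by
    rw [← cancel_epi ρ, ← Category.assoc, hργell, comp_zero, hγdef, hs'def,
      biprod.lift_desc]
    simp
  -- h₀ factors through ell
  have hαπ : (h₀ ≫ α) ≫ cokernel.π φ = 0 := by
    have h5 : (h₀ ≫ α) ≫ w = h₀ ≫ β ≫ k := by rw [Category.assoc, hcomm]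
    rw [← Category.assoc, hh₀, zero_comp] at h5
    -- from x ≫ w = 0 deduce x ≫ cokernel.π φ = 0
    have h6 : cokernel.π φ = w ≫ hw.desc (CokernelCofork.ofπ (cokernel.π φ)
        (cokernel.condition φ)) := by
      have := hw.fac (CokernelCofork.ofπ (cokernel.π φ) (cokernel.condition φ))
        WalkingParallelPair.one
      simpa using this.symm
    rw [h6, ← Category.assoc, h5, zero_comp]
  set v : W₀ ⟶ Abelian.image φ := kernel.lift (cokernel.π φ) (h₀ ≫ α) hαπ with hvdef
  set v : W₀ ⟶ Abelian.image φ := kernel.lift (cokernel.π φ) (h₀ ≫ α) hαπ with hvdef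
  have hvι : v ≫ Abelian.image.ι φ = h₀ ≫ α := kernel.lift_ι _ _ _
  have hh₀ell : h₀ = v ≫ ell := by
    apply hpb.hom_ext
    · rw [hh₀, Category.assoc, hellβ, comp_zero]
    · rw [Category.assoc, hellα, hvι]
  have hh₀s' : h₀ ≫ s' = 0 := by
    rw [hh₀ell, Category.assoc, hells, comp_zero]
  -- retraction of e
  set r : kernel u ⟶ C' := hβco.desc (CokernelCofork.ofπ s' hh₀s') with hrdef
  have hβr : β ≫ r = s' := by
    have := hβco.fac (CokernelCofork.ofπ s' hh₀s') WalkingParallelPair.one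
    simpa [hrdef] using this
  have her : e ≫ r = 𝟙 C' := by
    have h7 : biprod.inr ≫ β = e := by rw [hβdef]; simp
    have h8 : biprod.inr ≫ s' = 𝟙 C' := by rw [hs'def]; simp
    calc e ≫ r = biprod.inr ≫ β ≫ r := by rw [← Category.assoc, h7]
    _ = 𝟙 C' := by rw [hβr, h8]
  haveI heepi : Epi e := by
    haveI h9 : Epi (s' ≫ e) := by rw [← hβse]; exact hβepi
    exact epi_of_epi s' e
  have hre : r ≫ e = 𝟙 (kernel u) := by
    rw [← cancel_epi e, ← Category.assoc, her, Category.id_comp, Category.comp_id]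
  haveI heiso : IsIso e := ⟨r, her, hre⟩
  haveI hinrmono : Mono inr := by
    rw [← he_k]
    exact mono_comp e k
  have hrek : r ≫ e ≫ k = k := by rw [← Category.assoc, hre, Category.id_comp]
  refine ⟨Q, u, hinr_u, ⟨KernelFork.IsLimit.ofι' inr hinr_u (fun {T} t ht => ?_)⟩⟩
  refine ⟨kernel.lift u t ht ≫ r, ?_⟩
  rw [← he_k, Category.assoc, hrek, hkdef, kernel.lift_ι]

end Aux

theorem right_to_left_aux {C : Type u} [Category.{v} C] [Preadditive C] [HasFiniteBiproducts C]
    [HasKernels C] [HasCokernels C]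
    (hSemi : ∀ ⦃X Y : C⦄ (f : X ⟶ Y),
      Mono (Abelian.coimageImageComparison f) ∧ Epi (Abelian.coimageImageComparison f))
    (R : ∀ ⦃A B C' D : C⦄ (f : A ⟶ B) (g : A ⟶ C') (inl : B ⟶ D) (inr : C' ⟶ D),
        IsPushout f g inl inr → IsKernelMorphism f → IsKernelMorphism inr)
    {A B C' D : C} (a : A ⟶ B) (b : A ⟶ C') (c : B ⟶ D) (d : C' ⟶ D)
    (sq : IsPullback a b c d) (hd : IsCokernelMorphism d) : IsCokernelMorphism a := by
  haveI : HasBinaryBiproducts C := hasBinaryBiproducts_of_finite_biproducts C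
  obtain ⟨W, h, hhd, ⟨hcolim⟩⟩ := hd
  have hdepi : Epi d := by
    have := epi_of_isColimit_cofork hcolim
    simpa using this
  have hdescd : ∀ {T : C} (y : C' ⟶ T), h ≫ y = 0 → ∃ l : D ⟶ T, d ≫ l = y := by
    intro T y hy
    obtain ⟨l, hl⟩ := CokernelCofork.IsColimit.desc' hcolim y hy
    exact ⟨l, by simpa using hl⟩
  -- the induced map u : W ⟶ A
  set u : W ⟶ A := sq.lift 0 h (by rw [hhd, zero_comp]) with hu
  have hua : u ≫ a = 0 := sq.lift_fst _ _ _
  have hub : u ≫ b = h := sq.lift_snd _ _ _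
  -- the cokernel of u, through which a factors
  set k : A ⟶ cokernel u := cokernel.π u with hkdef
  set e : cokernel u ⟶ B := cokernel.desc u a hua with hedef
  have he_k : k ≫ e = a := cokernel.π_desc u a hua
  have hkepi : Epi k := by rw [hkdef]; infer_instance
  have huk : u ≫ k = 0 := by rw [hkdef]; simp
  -- A is the kernel of φ' via w'
  set w' : A ⟶ C' ⊞ B := biprod.lift b a with hw'def
  set φ' : C' ⊞ B ⟶ D := biprod.desc d (-c) with hφ'def
  have hw'φ' : w' ≫ φ' = 0 := by
    rw [hw'def, hφ'def, biprod.lift_desc]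
    simp [sq.w]
  have hw' : IsLimit (KernelFork.ofι w' hw'φ') := by
    refine KernelFork.IsLimit.ofι _ _
      (fun {T} t ht => sq.lift (t ≫ biprod.snd) (t ≫ biprod.fst) ?_) ?_ ?_
    · have h2 : t ≫ φ' = 0 := ht
      rw [hφ'def, biprod.desc_eq] at h2
      simp only [Preadditive.comp_add, Preadditive.comp_neg, Category.assoc] at h2
      rw [add_neg_eq_zero] at h2
      rw [Category.assoc, Category.assoc]
      exact h2.symm
    · intro T t ht
      apply biprod.hom_ext
      · rw [hw'def]
        simp only [Category.assoc, biprod.lift_fst]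
        exact sq.lift_snd _ _ _
      · rw [hw'def]
        simp only [Category.assoc, biprod.lift_snd]
        exact sq.lift_fst _ _ _
    · intro T t ht m hm
      apply sq.hom_ext
      · rw [sq.lift_fst, ← hm, hw'def, Category.assoc, biprod.lift_snd]
      · rw [sq.lift_snd, ← hm, hw'def, Category.assoc, biprod.lift_fst]
  -- the pushout square
  set α' : C' ⊞ B ⟶ D ⊞ B := biprod.map d (𝟙 B) with hα'def
  set β' : cokernel u ⟶ D ⊞ B := biprod.lift (e ≫ c) e with hβ'def
  have hcomm : w' ≫ α' = k ≫ β' := by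
    apply biprod.hom_ext
    · simp only [hw'def, hα'def, hβ'def, Category.assoc, biprod.map_fst, biprod.lift_fst,
        biprod.lift_fst_assoc]
      rw [← Category.assoc, he_k]
      exact sq.w.symm
    · rw [hw'def, hα'def, hβ'def]
      simp [he_k]
  have key : ∀ {T : C} (x : C' ⊞ B ⟶ T) (y : cokernel u ⟶ T), w' ≫ x = k ≫ y →
      h ≫ (biprod.inl ≫ x) = 0 := by
    intro T x y hxy
    have h3 : (u ≫ w') ≫ x = (u ≫ k) ≫ y := by
      rw [Category.assoc, Category.assoc, hxy]
    rw [huk, zero_comp] at h3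
    have h4 : u ≫ w' = h ≫ biprod.inl := by
      apply biprod.hom_ext
      · rw [hw'def]; simp [hub]
      · rw [hw'def]; simp [hua]
    rw [h4, Category.assoc] at h3
    exact h3
  have hpo : IsPushout w' k α' β' := by
    refine IsPushout.of_isColimit (PushoutCocone.IsColimit.mk hcomm
      (fun s => biprod.desc (hdescd (biprod.inl ≫ s.inl)
        (key s.inl s.inr s.condition)).choose (biprod.inr ≫ s.inl)) ?_ ?_ ?_)
    · intro s
      apply biprod.hom_ext'
      · rw [hα'def]
        simp only [biprod.inl_map_assoc, biprod.inl_desc, Category.assoc]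
        exact (hdescd (biprod.inl ≫ s.inl) (key s.inl s.inr s.condition)).choose_spec
      · rw [hα'def]; simp
    · intro s
      have hfl : α' ≫ (biprod.desc (hdescd (biprod.inl ≫ s.inl)
          (key s.inl s.inr s.condition)).choose (biprod.inr ≫ s.inl)) = s.inl := by
        apply biprod.hom_ext'
        · rw [hα'def]
          simp only [biprod.inl_map_assoc, biprod.inl_desc, Category.assoc]
          exact (hdescd (biprod.inl ≫ s.inl) (key s.inl s.inr s.condition)).choose_spec
        · rw [hα'def]; simp
      rw [← cancel_epi k, ← Category.assoc, ← hcomm, Category.assoc, hfl, s.condition]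
    · intro s m hm1 hm2
      apply biprod.hom_ext'
      · rw [← cancel_epi d]
        rw [biprod.inl_desc]
        rw [(hdescd (biprod.inl ≫ s.inl) (key s.inl s.inr s.condition)).choose_spec]
        have : biprod.inl ≫ α' ≫ m = biprod.inl ≫ s.inl := by rw [hm1]
        rw [hα'def, biprod.inl_map_assoc] at this
        simpa using this
      · rw [biprod.inr_desc]
        have : biprod.inr ≫ α' ≫ m = biprod.inr ≫ s.inl := by rw [hm1]
        rw [hα'def, biprod.inr_map_assoc] at this
        simpa using this
  -- β' is a kernel, by stability
  obtain ⟨W₀, h₀, hh₀, ⟨hβker⟩⟩ := R w' k α' β' hpo ⟨D, φ', hw'φ', ⟨hw'⟩⟩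
  have hβmono : Mono β' := by
    have := mono_of_isLimit_fork hβker
    simpa using this
  have hliftβ : ∀ {T : C} (y : T ⟶ D ⊞ B), y ≫ h₀ = 0 → ∃ l : T ⟶ cokernel u,
      l ≫ β' = y := by
    intro T y hy
    obtain ⟨l, hl⟩ := KernelFork.IsLimit.lift' hβker y hy
    exact ⟨l, by simpa using hl⟩
  -- the comparison map ρ'
  set ρ' : Abelian.coimage φ' ⟶ D :=
    Abelian.coimageImageComparison φ' ≫ Abelian.image.ι φ' with hρ'def
  have hρmono : Mono ρ' := by
    have := (hSemi φ').1
    rw [hρ'def]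
    exact mono_comp _ _
  have hπρ : Abelian.coimage.π φ' ≫ ρ' = φ' := by
    rw [hρ'def]
    exact Abelian.coimage_image_factorisation φ'
  -- the map ell : D ⊞ B ⟶ coimage φ'
  have hw'π : w' ≫ Abelian.coimage.π φ' = 0 := by
    have h5 : w' = kernel.lift φ' w' hw'φ' ≫ kernel.ι φ' := (kernel.lift_ι φ' w' hw'φ').symm
    rw [h5, Category.assoc, cokernel.condition, comp_zero]
  set ell : D ⊞ B ⟶ Abelian.coimage φ' :=
    hpo.desc (Abelian.coimage.π φ') 0 (by rw [hw'π, comp_zero]) with helldef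
  have hαell : α' ≫ ell = Abelian.coimage.π φ' := hpo.inl_desc _ _ _
  have hβell : β' ≫ ell = 0 := hpo.inr_desc _ _ _
  -- γ'
  set γ' : D ⊞ B ⟶ D := biprod.desc (𝟙 D) (-c) with hγ'def
  have hαγ : α' ≫ γ' = φ' := by
    apply biprod.hom_ext'
    · rw [hα'def, hγ'def, hφ'def]; simp
    · rw [hα'def, hγ'def, hφ'def]; simp
  have hβγ : β' ≫ γ' = 0 := by
    rw [hβ'def, hγ'def, biprod.lift_desc]
    simp
  have hellρ : ell ≫ ρ' = γ' := by
    apply hpo.hom_ext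
    · rw [← Category.assoc, hαell, hπρ, hαγ]
    · rw [← Category.assoc, hβell, zero_comp, hβγ]
  -- s''
  set s'' : B ⟶ D ⊞ B := biprod.lift c (𝟙 B) with hs''def
  have hβes : β' = e ≫ s'' := by
    rw [hβ'def, hs''def]
    apply biprod.hom_ext
    · simp
    · simp
  have hsell : s'' ≫ ell = 0 := by
    rw [← cancel_mono ρ', Category.assoc, hellρ, zero_comp, hs''def, hγ'def,
      biprod.lift_desc]
    simp
  -- h₀ factors through ell
  have hιh₀ : kernel.ι φ' ≫ (α' ≫ h₀) = 0 := by
    have h6 : w' ≫ α' ≫ h₀ = 0 := by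
      rw [← Category.assoc, hcomm, Category.assoc, hh₀, comp_zero]
    obtain ⟨d₁, hd₁⟩ := KernelFork.IsLimit.lift' hw' (kernel.ι φ') (kernel.condition φ')
    have hd₁' : d₁ ≫ w' = kernel.ι φ' := by simpa using hd₁
    rw [← hd₁', Category.assoc, h6, comp_zero]
  set v : Abelian.coimage φ' ⟶ W₀ := cokernel.desc (kernel.ι φ') (α' ≫ h₀) hιh₀ with hvdef
  have hπv : Abelian.coimage.π φ' ≫ v = α' ≫ h₀ := cokernel.π_desc _ _ _
  have hh₀ell : h₀ = ell ≫ v := by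
    apply hpo.hom_ext
    · rw [← Category.assoc, hαell, hπv]
    · rw [hh₀, ← Category.assoc, hβell, zero_comp]
  have hsh₀ : s'' ≫ h₀ = 0 := by
    rw [hh₀ell, ← Category.assoc, hsell, zero_comp]
  obtain ⟨r, hr⟩ := hliftβ s'' hsh₀
  have hre : r ≫ e = 𝟙 B := by
    have h7 : β' ≫ biprod.snd = e := by rw [hβ'def]; simp
    have h8 : s'' ≫ biprod.snd = 𝟙 B := by rw [hs''def]; simp
    calc r ≫ e = (r ≫ β') ≫ biprod.snd := by rw [Category.assoc, h7]
    _ = 𝟙 B := by rw [hr, h8]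
  haveI hemono : Mono e := by
    haveI h9 : Mono (e ≫ s'') := by rw [← hβes]; exact hβmono
    exact mono_of_mono e s''
  have her : e ≫ r = 𝟙 (cokernel u) := by
    rw [← cancel_mono e, Category.assoc, hre, Category.comp_id, Category.id_comp]
  haveI heiso : IsIso e := ⟨r, her, hre⟩
  haveI haepi : Epi a := by
    rw [← he_k]
    exact epi_comp k e
  have hkdesc : ∀ {T : C} (t : A ⟶ T) (ht : u ≫ t = 0),
      e ≫ r ≫ cokernel.desc u t ht = cokernel.desc u t ht := by
    intro T t ht
    rw [← Category.assoc, her, Category.id_comp]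
  refine ⟨W, u, hua, ⟨CokernelCofork.IsColimit.ofπ' a hua (fun {T} t ht => ?_)⟩⟩
  refine ⟨r ≫ cokernel.desc u t ht, ?_⟩
  rw [← he_k, Category.assoc, hkdesc t ht, hkdef, cokernel.π_desc]


/-- In a semi-abelian category, cokernels are stable under pullback iff
kernels are stable under pushout. -/
theorem stmt2 {C : Type u} [Category.{v} C] [Preadditive C] [HasFiniteBiproducts C]
    [HasKernels C] [HasCokernels C]
    (hSemi : ∀ ⦃X Y : C⦄ (f : X ⟶ Y),
      Mono (Abelian.coimageImageComparison f) ∧ Epi (Abelian.coimageImageComparison f)) :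
    (∀ ⦃A B C' D : C⦄ (a : A ⟶ B) (b : A ⟶ C') (c : B ⟶ D) (d : C' ⟶ D),
        IsPullback a b c d → IsCokernelMorphism d → IsCokernelMorphism a) ↔
    (∀ ⦃A B C' D : C⦄ (f : A ⟶ B) (g : A ⟶ C') (inl : B ⟶ D) (inr : C' ⟶ D),
        IsPushout f g inl inr → IsKernelMorphism f → IsKernelMorphism inr) := by
  constructor
  · intro L A B C' D f g inl inr sq hf
    exact left_to_right_aux hSemi L f g inl inr sq hf
  · intro R A B C' D a b c d sq hd
    exact right_to_left_aux hSemi R a b c d sq hd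
end

section
/- In a semi-abelian category, epimorphisms are stable under pullback if and only if monomorphisms are stable under pushout; i.e., left integral is equivalent to right integral. -/
open CategoryTheory CategoryTheory.Limits

universe v u

section Aux

variable {C : Type u} [Category.{v} C] [Preadditive C] [HasBinaryBiproducts C]

/-- The kernel of `biprod.desc u (-v)` is a pullback of `u` and `v`. -/
lemma aux_isPullback [HasKernels C] {X Y Z : C} (u : X ⟶ Z) (v : Y ⟶ Z) :
    IsPullback (kernel.ι (biprod.desc u (-v)) ≫ biprod.fst)
      (kernel.ι (biprod.desc u (-v)) ≫ biprod.snd) u v := by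
  have eq : (kernel.ι (biprod.desc u (-v)) ≫ biprod.fst) ≫ u
      = (kernel.ι (biprod.desc u (-v)) ≫ biprod.snd) ≫ v := by
    rw [← sub_eq_zero]
    have : (kernel.ι (biprod.desc u (-v)) ≫ biprod.fst) ≫ u -
        (kernel.ι (biprod.desc u (-v)) ≫ biprod.snd) ≫ v
        = kernel.ι (biprod.desc u (-v)) ≫ biprod.desc u (-v) := by
      rw [biprod.desc_eq]
      simp [Preadditive.comp_add, sub_eq_add_neg]
    rw [this, kernel.condition]
  refine IsPullback.of_isLimit (PullbackCone.IsLimit.mk eq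
    (fun s => kernel.lift _ (biprod.lift s.fst s.snd) ?_) (fun s => ?_) (fun s => ?_)
    (fun s m h1 h2 => ?_)
    )
  · rw [biprod.lift_desc]
    simp [s.condition]
  · rw [← Category.assoc, kernel.lift_ι, biprod.lift_fst]
  · rw [← Category.assoc, kernel.lift_ι, biprod.lift_snd]
  · apply (cancel_mono (kernel.ι (biprod.desc u (-v)))).1
    rw [kernel.lift_ι]
    apply biprod.hom_ext
    · simpa using h1
    · simpa using h2

/-- The cokernel of `biprod.lift u (-v)` is a pushout of `u` and `v`. -/
lemma aux_isPushout [HasCokernels C] {X Y Z : C} (u : X ⟶ Y) (v : X ⟶ Z) :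
    IsPushout u v (biprod.inl ≫ cokernel.π (biprod.lift u (-v)))
      (biprod.inr ≫ cokernel.π (biprod.lift u (-v))) := by
  have eq : u ≫ biprod.inl ≫ cokernel.π (biprod.lift u (-v))
      = v ≫ biprod.inr ≫ cokernel.π (biprod.lift u (-v)) := by
    rw [← sub_eq_zero]
    have : u ≫ biprod.inl ≫ cokernel.π (biprod.lift u (-v)) -
        v ≫ biprod.inr ≫ cokernel.π (biprod.lift u (-v))
        = biprod.lift u (-v) ≫ cokernel.π (biprod.lift u (-v)) := by
      rw [biprod.lift_eq]
      simp [Preadditive.add_comp, sub_eq_add_neg]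
    rw [this, cokernel.condition]
  refine IsPushout.of_isColimit (PushoutCocone.IsColimit.mk eq
    (fun s => cokernel.desc _ (biprod.desc s.inl s.inr) ?_) (fun s => ?_) (fun s => ?_)
    (fun s m h1 h2 => ?_)
    )
  · rw [biprod.lift_desc]
    simp [s.condition]
  · rw [Category.assoc, cokernel.π_desc, biprod.inl_desc]
  · rw [Category.assoc, cokernel.π_desc, biprod.inr_desc]
  · apply (cancel_epi (cokernel.π (biprod.lift u (-v)))).1
    rw [cokernel.π_desc]
    apply biprod.hom_ext'
    · simpa using h1
    · simpa using h2

end Aux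

section Main

variable {C : Type u} [Category.{v} C] [Preadditive C] [HasFiniteBiproducts C]
    [HasKernels C] [HasCokernels C]

/-- Left integral implies right integral in a semi-abelian category. -/
lemma left_to_right
    (hSemi : ∀ ⦃X Y : C⦄ (f : X ⟶ Y),
      Mono (Abelian.coimageImageComparison f) ∧ Epi (Abelian.coimageImageComparison f))
    (hL : ∀ ⦃A B C' D : C⦄ (a : A ⟶ B) (b : A ⟶ C') (c : B ⟶ D) (d : C' ⟶ D),
        IsPullback a b c d → Epi d → Epi a)
    ⦃A B C' D : C⦄ (f : A ⟶ B) (g : A ⟶ C') (inl : B ⟶ D) (inr : C' ⟶ D)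
    (hP : IsPushout f g inl inr) (hf : Mono f) : Mono inr := by
  haveI : HasBinaryBiproducts C := hasBinaryBiproducts_of_finite_biproducts C
  set h : A ⟶ B ⊞ C' := biprod.lift f (-g) with hh
  -- the epi part of the image factorization of `h`
  set e : A ⟶ Abelian.image h := Abelian.coimage.π h ≫ Abelian.coimageImageComparison h with he
  have hee : Epi e := by
    have := (hSemi h).2
    exact epi_comp _ _
  have hfac : e ≫ kernel.ι (cokernel.π h) = h := by
    rw [he, Category.assoc]
    exact Abelian.coimage_image_factorisation h
  -- φ : image h ⟶ B is mono
  set φ : Abelian.image h ⟶ B := kernel.ι (cokernel.π h) ≫ biprod.fst with hφdef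
  have hφ : Mono φ := by
    set k' : kernel φ ⟶ Abelian.image h := kernel.ι φ with hk'
    have sq := aux_isPullback e k'
    have hEpi2 : Epi (kernel.ι (biprod.desc e (-k')) ≫ biprod.snd) :=
      hL _ _ _ _ sq.flip hee
    have heφ : e ≫ φ = f := by
      rw [hφdef, ← Category.assoc, hfac, hh, biprod.lift_fst]
    have h1 : (kernel.ι (biprod.desc e (-k')) ≫ biprod.fst) ≫ f = 0 := by
      rw [← heφ]
      calc (kernel.ι (biprod.desc e (-k')) ≫ biprod.fst) ≫ e ≫ φ
          = ((kernel.ι (biprod.desc e (-k')) ≫ biprod.fst) ≫ e) ≫ φ :=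
            (Category.assoc _ _ _).symm
        _ = ((kernel.ι (biprod.desc e (-k')) ≫ biprod.snd) ≫ k') ≫ φ := by rw [sq.w]
        _ = (kernel.ι (biprod.desc e (-k')) ≫ biprod.snd) ≫ k' ≫ φ :=
            Category.assoc _ _ _
        _ = 0 := by rw [hk', kernel.condition, comp_zero]
    have h2 : (kernel.ι (biprod.desc e (-k')) ≫ biprod.fst) = 0 := by
      haveI := hf; exact zero_of_comp_mono f h1
    have h3 : (kernel.ι (biprod.desc e (-k')) ≫ biprod.snd) ≫ k' = 0 := by
      rw [← sq.w, h2, zero_comp]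
    have h4 : k' = 0 := by haveI := hEpi2; exact zero_of_epi_comp _ h3
    apply Preadditive.mono_of_cancel_zero
    intro P t ht
    have : t = kernel.lift φ t ht ≫ k' := (kernel.lift_ι φ t ht).symm
    rw [this, h4, comp_zero]
  -- `biprod.inr ≫ cokernel.π h` is mono
  have key : Mono ((biprod.inr : C' ⟶ B ⊞ C') ≫ cokernel.π h) := by
    apply Preadditive.mono_of_cancel_zero
    intro T t ht
    have ht' : (t ≫ biprod.inr) ≫ cokernel.π h = 0 := by
      rw [Category.assoc]; exact ht
    have hv : kernel.lift (cokernel.π h) (t ≫ biprod.inr) ht' ≫ kernel.ι (cokernel.π h)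
        = t ≫ biprod.inr := kernel.lift_ι _ _ _
    have hvφ : kernel.lift (cokernel.π h) (t ≫ biprod.inr) ht' ≫ φ = 0 := by
      rw [hφdef, ← Category.assoc, hv, Category.assoc, biprod.inr_fst, comp_zero]
    have hv0 : kernel.lift (cokernel.π h) (t ≫ biprod.inr) ht' = 0 := by
      haveI := hφ; exact zero_of_comp_mono φ hvφ
    have : t ≫ (biprod.inr : C' ⟶ B ⊞ C') = 0 := by rw [← hv, hv0, zero_comp]
    calc t = (t ≫ (biprod.inr : C' ⟶ B ⊞ C')) ≫ biprod.snd := by simp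
    _ = 0 := by rw [this, zero_comp]
  -- transfer along the isomorphism of pushouts
  have hP2 := aux_isPushout f g
  rw [← hh] at hP2
  have heqr : inr ≫ (hP.isoIsPushout _ _ hP2).hom = biprod.inr ≫ cokernel.π h :=
    IsPushout.inr_isoIsPushout_hom _ _ hP hP2
  haveI : Mono (inr ≫ (hP.isoIsPushout _ _ hP2).hom) := by rw [heqr]; exact key
  exact mono_of_mono inr (hP.isoIsPushout _ _ hP2).hom

/-- Right integral implies left integral in a semi-abelian category. -/
lemma right_to_left
    (hSemi : ∀ ⦃X Y : C⦄ (f : X ⟶ Y),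
      Mono (Abelian.coimageImageComparison f) ∧ Epi (Abelian.coimageImageComparison f))
    (hR : ∀ ⦃A B C' D : C⦄ (f : A ⟶ B) (g : A ⟶ C') (inl : B ⟶ D) (inr : C' ⟶ D),
        IsPushout f g inl inr → Mono f → Mono inr)
    ⦃A B C' D : C⦄ (a : A ⟶ B) (b : A ⟶ C') (c : B ⟶ D) (d : C' ⟶ D)
    (hP : IsPullback a b c d) (hd : Epi d) : Epi a := by
  haveI : HasBinaryBiproducts C := hasBinaryBiproducts_of_finite_biproducts C
  set h : B ⊞ C' ⟶ D := biprod.desc c (-d) with hh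
  -- the mono part of the coimage factorization of `h`
  set m : Abelian.coimage h ⟶ D :=
    Abelian.coimageImageComparison h ≫ kernel.ι (cokernel.π h) with hm
  have hmm : Mono m := by
    have := (hSemi h).1
    exact mono_comp _ _
  have hfac : cokernel.π (kernel.ι h) ≫ m = h := by
    rw [hm]
    exact Abelian.coimage_image_factorisation h
  -- ψ : C' ⟶ coimage h is epi
  set ψ : C' ⟶ Abelian.coimage h := biprod.inr ≫ cokernel.π (kernel.ι h) with hψdef
  have hψ : Epi ψ := by
    set q' : Abelian.coimage h ⟶ cokernel ψ := cokernel.π ψ with hq'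
    have sq := aux_isPushout m q'
    have hMono2 : Mono (biprod.inr ≫ cokernel.π (biprod.lift m (-q'))) :=
      hR _ _ _ _ sq hmm
    have hψm : ψ ≫ m = -d := by
      rw [hψdef, Category.assoc, hfac, hh, biprod.inr_desc]
    have h1 : d ≫ (biprod.inl ≫ cokernel.π (biprod.lift m (-q'))) = 0 := by
      have e1 : (-d) ≫ (biprod.inl ≫ cokernel.π (biprod.lift m (-q')))
          = ψ ≫ q' ≫ (biprod.inr ≫ cokernel.π (biprod.lift m (-q'))) := by
        rw [← hψm, Category.assoc, sq.w]
      have e2 : ψ ≫ q' ≫ (biprod.inr ≫ cokernel.π (biprod.lift m (-q'))) = 0 := by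
        rw [← Category.assoc, hq', cokernel.condition, zero_comp]
      have : -(d ≫ (biprod.inl ≫ cokernel.π (biprod.lift m (-q')))) = 0 := by
        rw [← Preadditive.neg_comp, e1, e2]
      exact neg_eq_zero.mp this
    have h2 : (biprod.inl ≫ cokernel.π (biprod.lift m (-q'))) = 0 := by
      haveI := hd; exact zero_of_epi_comp d h1
    have h3 : q' ≫ (biprod.inr ≫ cokernel.π (biprod.lift m (-q'))) = 0 := by
      rw [← sq.w, h2, comp_zero]
    have h4 : q' = 0 := by haveI := hMono2; exact zero_of_comp_mono _ h3
    apply Preadditive.epi_of_cancel_zero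
    intro T t ht
    have : t = q' ≫ cokernel.desc ψ t ht := (cokernel.π_desc ψ t ht).symm
    rw [this, h4, zero_comp]
  -- `kernel.ι h ≫ biprod.fst` is epi
  have key : Epi (kernel.ι h ≫ (biprod.fst : B ⊞ C' ⟶ B)) := by
    apply Preadditive.epi_of_cancel_zero
    intro T u hu
    have hu' : kernel.ι h ≫ ((biprod.fst : B ⊞ C' ⟶ B) ≫ u) = 0 := by
      rw [← Category.assoc]; exact hu
    have hv : cokernel.π (kernel.ι h) ≫ cokernel.desc (kernel.ι h) _ hu'
        = (biprod.fst : B ⊞ C' ⟶ B) ≫ u := cokernel.π_desc _ _ _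
    have hψv : ψ ≫ cokernel.desc (kernel.ι h) _ hu' = 0 := by
      rw [hψdef, Category.assoc, hv, ← Category.assoc, biprod.inr_fst, zero_comp]
    have hv0 : cokernel.desc (kernel.ι h) ((biprod.fst : B ⊞ C' ⟶ B) ≫ u) hu' = 0 := by
      haveI := hψ; exact zero_of_epi_comp ψ hψv
    have hfu : (biprod.fst : B ⊞ C' ⟶ B) ≫ u = 0 := by rw [← hv, hv0, comp_zero]
    calc u = (biprod.inl ≫ (biprod.fst : B ⊞ C' ⟶ B)) ≫ u := by simp
    _ = biprod.inl ≫ ((biprod.fst : B ⊞ C' ⟶ B) ≫ u) := by rw [Category.assoc]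
    _ = 0 := by rw [hfu, comp_zero]
  -- transfer along the isomorphism of pullbacks
  have hP2 := aux_isPullback c d
  rw [← hh] at hP2
  have heq : (hP.isoIsPullback _ _ hP2).hom ≫ (kernel.ι h ≫ biprod.fst) = a :=
    IsPullback.isoIsPullback_hom_fst _ _ hP hP2
  rw [← heq]
  haveI := key
  exact epi_comp _ _

end Main

/-- In a semi-abelian category, epimorphisms are stable under pullback iff
monomorphisms are stable under pushout. -/
theorem stmt3 {C : Type u} [Category.{v} C] [Preadditive C] [HasFiniteBiproducts C]
    [HasKernels C] [HasCokernels C]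
    (hSemi : ∀ ⦃X Y : C⦄ (f : X ⟶ Y),
      Mono (Abelian.coimageImageComparison f) ∧ Epi (Abelian.coimageImageComparison f)) :
    (∀ ⦃A B C' D : C⦄ (a : A ⟶ B) (b : A ⟶ C') (c : B ⟶ D) (d : C' ⟶ D),
        IsPullback a b c d → Epi d → Epi a) ↔
    (∀ ⦃A B C' D : C⦄ (f : A ⟶ B) (g : A ⟶ C') (inl : B ⟶ D) (inr : C' ⟶ D),
        IsPushout f g inl inr → Mono f → Mono inr) := by
  constructor
  · intro hL; exact left_to_right hSemi hL
  · intro hR; exact right_to_left hSemi hR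
end

section
/- A pre-abelian category is semi-abelian if and only if every morphism f factors as f = i ∘ p with i a monomorphism and p a cokernel, and also factors as f = j ∘ q with j a kernel and q an epimorphism. -/
open CategoryTheory CategoryTheory.Limits

universe v u

/-- A pre-abelian category is semi-abelian (the parallel morphism
coim f ⟶ im f is always monic and epic) iff every morphism factors both as a
monomorphism after a cokernel and as a kernel after an epimorphism. -/
theorem stmt4 {C : Type u} [Category.{v} C] [Preadditive C] [HasFiniteBiproducts C]
    [HasKernels C] [HasCokernels C] :
    (∀ ⦃X Y : C⦄ (f : X ⟶ Y),
      Mono (Abelian.coimageImageComparison f) ∧ Epi (Abelian.coimageImageComparison f)) ↔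
    (∀ ⦃X Y : C⦄ (f : X ⟶ Y),
      (∃ (Z : C) (p : X ⟶ Z) (i : Z ⟶ Y), IsCokernelMorphism p ∧ Mono i ∧ p ≫ i = f) ∧
      (∃ (Z : C) (q : X ⟶ Z) (j : Z ⟶ Y), Epi q ∧ IsKernelMorphism j ∧ q ≫ j = f)) := by
  constructor
  · intro h X Y f
    obtain ⟨hmono, hepi⟩ := h f
    constructor
    · refine ⟨Abelian.coimage f, Abelian.coimage.π f,
        Abelian.coimageImageComparison f ≫ Abelian.image.ι f, ?_, ?_, ?_⟩
      · exact ⟨kernel f, kernel.ι f, cokernel.condition _, ⟨cokernelIsCokernel _⟩⟩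
      · exact mono_comp _ _
      · simp
    · refine ⟨Abelian.image f, Abelian.coimage.π f ≫ Abelian.coimageImageComparison f,
        Abelian.image.ι f, ?_, ?_, ?_⟩
      · exact epi_comp _ _
      · exact ⟨cokernel f, cokernel.π f, kernel.condition _, ⟨kernelIsKernel _⟩⟩
      · simp
  · intro h X Y f
    obtain ⟨⟨Z, p, i, ⟨W, g, w, ⟨hc⟩⟩, hi, hpi⟩, ⟨Z', q, j, hq, ⟨W', g', w', ⟨hl⟩⟩, hqj⟩⟩ := h f
    constructor
    · -- mono part, using the (cokernel, mono) factorization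
      have hker : kernel.ι f ≫ p = 0 := by
        rw [← cancel_mono i, Category.assoc, hpi, kernel.condition, zero_comp]
      have hgf : g ≫ f = 0 := by rw [← hpi, ← Category.assoc, w, zero_comp]
      have hg : g = kernel.lift f g hgf ≫ kernel.ι f := by simp
      -- p is a cokernel of kernel.ι f
      let myColim : IsColimit (CokernelCofork.ofπ p hker) :=
        CokernelCofork.IsColimit.ofπ _ _
          (fun {Z''} h' hw => hc.desc (CokernelCofork.ofπ h'
            (by rw [hg, Category.assoc, hw, comp_zero])))
          (fun {Z''} h' hw => Cofork.IsColimit.π_desc hc)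
          (fun {Z''} h' hw m hm => by
            apply Cofork.IsColimit.hom_ext hc
            rw [Cofork.IsColimit.π_desc hc]
            exact hm)
      let e : Abelian.coimage f ≅ Z :=
        IsColimit.coconePointUniqueUpToIso (cokernelIsCokernel (kernel.ι f)) myColim
      have he : Abelian.coimage.π f ≫ e.hom = p :=
        IsColimit.comp_coconePointUniqueUpToIso_hom (cokernelIsCokernel (kernel.ι f)) myColim
          WalkingParallelPair.one
      have key : Abelian.coimageImageComparison f ≫ Abelian.image.ι f = e.hom ≫ i := by
        rw [← cancel_epi (Abelian.coimage.π f)]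
        rw [Abelian.coimage_image_factorisation, ← Category.assoc, he, hpi]
      have : Mono (Abelian.coimageImageComparison f ≫ Abelian.image.ι f) := by
        rw [key]; exact mono_comp _ _
      exact mono_of_mono _ (Abelian.image.ι f)
    · -- epi part, using the (epi, kernel) factorization
      have hcoker : j ≫ cokernel.π f = 0 := by
        rw [← cancel_epi q, ← Category.assoc, hqj, cokernel.condition, comp_zero]
      have hfg : f ≫ g' = 0 := by rw [← hqj, Category.assoc, w', comp_zero]
      have hg' : g' = cokernel.π f ≫ cokernel.desc f g' hfg := by simp
      -- j is a kernel of cokernel.π f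
      let myLim : IsLimit (KernelFork.ofι j hcoker) :=
        KernelFork.IsLimit.ofι _ _
          (fun {W''} k hw => hl.lift (KernelFork.ofι k
            (by rw [hg', ← Category.assoc, hw, zero_comp])))
          (fun {W''} k hw => Fork.IsLimit.lift_ι hl)
          (fun {W''} k hw m hm => by
            apply Fork.IsLimit.hom_ext hl
            rw [Fork.IsLimit.lift_ι hl]
            exact hm)
      let e := IsLimit.conePointUniqueUpToIso myLim (kernelIsKernel (cokernel.π f))
      have he : e.hom ≫ Abelian.image.ι f = j := by
        simpa using IsLimit.conePointUniqueUpToIso_hom_comp myLim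
          (kernelIsKernel (cokernel.π f)) WalkingParallelPair.zero
      have key : Abelian.coimage.π f ≫ Abelian.coimageImageComparison f = q ≫ e.hom := by
        rw [← cancel_mono (Abelian.image.ι f)]
        rw [Category.assoc, Abelian.coimage_image_factorisation, Category.assoc, he, hqj]
      have : Epi (Abelian.coimage.π f ≫ Abelian.coimageImageComparison f) := by
        rw [key]; exact epi_comp _ _
      exact epi_of_epi (Abelian.coimage.π f) _
end

section
/- In a pre-abelian category equipped with an exact structure, suppose that for any two admissible monomorphisms c : B ↣ D and d : C ↣ D, the two projections from the pullback of c and d are again admissible monomorphisms (the admissible intersection property). Then every kernel-cokernel pair in the category belongs to the exact structure. -/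
open CategoryTheory CategoryTheory.Limits

universe v u

variable (C : Type u) [Category.{v} C] [Preadditive C]

/-- A Quillen exact structure on an additive category: a class `E` of kernel-cokernel pairs,
closed under isomorphisms, containing the identities as admissible monomorphisms and
epimorphisms, with admissible monomorphisms and epimorphisms closed under composition, and
with admissible monomorphisms (resp. epimorphisms) stable under pushout (resp. pullback). -/
structure ExactStructure where
  /-- the class of exact (kernel-cokernel) pairs -/
  E : ∀ ⦃X Y Z : C⦄, (X ⟶ Y) → (Y ⟶ Z) → Prop
  kernel_cokernel : ∀ ⦃X Y Z : C⦄ (f : X ⟶ Y) (g : Y ⟶ Z), E f g →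
    ∃ w : f ≫ g = 0, Nonempty (IsLimit (KernelFork.ofι f w)) ∧
      Nonempty (IsColimit (CokernelCofork.ofπ g w))
  iso_closed : ∀ ⦃X Y Z X' Y' Z' : C⦄ (f : X ⟶ Y) (g : Y ⟶ Z) (f' : X' ⟶ Y') (g' : Y' ⟶ Z')
    (eX : X ≅ X') (eY : Y ≅ Y') (eZ : Z ≅ Z'),
    f ≫ eY.hom = eX.hom ≫ f' → g ≫ eZ.hom = eY.hom ≫ g' → E f g → E f' g'
  id_admMono : ∀ X : C, ∃ (Z : C) (g : X ⟶ Z), E (𝟙 X) g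
  id_admEpi : ∀ X : C, ∃ (W : C) (f : W ⟶ X), E f (𝟙 X)
  admMono_comp : ∀ ⦃X Y Z : C⦄ (f : X ⟶ Y) (f' : Y ⟶ Z),
    (∃ (W : C) (g : Y ⟶ W), E f g) → (∃ (W : C) (g : Z ⟶ W), E f' g) →
    ∃ (W : C) (g : Z ⟶ W), E (f ≫ f') g
  admEpi_comp : ∀ ⦃X Y Z : C⦄ (g : X ⟶ Y) (g' : Y ⟶ Z),
    (∃ (W : C) (f : W ⟶ X), E f g) → (∃ (W : C) (f : W ⟶ Y), E f g') →
    ∃ (W : C) (f : W ⟶ X), E f (g ≫ g')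
  pushout_admMono : ∀ ⦃X Y : C⦄ (f : X ⟶ Y), (∃ (W : C) (g : Y ⟶ W), E f g) →
    ∀ ⦃Z : C⦄ (h : X ⟶ Z), ∃ (P : C) (inl : Y ⟶ P) (inr : Z ⟶ P),
      IsPushout f h inl inr ∧ ∃ (W : C) (g : P ⟶ W), E inr g
  pullback_admEpi : ∀ ⦃X Y : C⦄ (g : X ⟶ Y), (∃ (W : C) (f : W ⟶ X), E f g) →
    ∀ ⦃Z : C⦄ (h : Z ⟶ Y), ∃ (P : C) (fst : P ⟶ X) (snd : P ⟶ Z),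
      IsPullback fst snd g h ∧ ∃ (W : C) (f : W ⟶ P), E f snd

variable {C}

/-- A morphism is an admissible monomorphism for an exact structure if it occurs as the
first map of an exact pair. -/
def ExactStructure.AdmMono (S : ExactStructure C) {X Y : C} (f : X ⟶ Y) : Prop :=
  ∃ (W : C) (g : Y ⟶ W), S.E f g

/-!
Let `f` be a kernel of `g : Y ⟶ Z`. The summand inclusion `Y ⟶ Y ⊞ Z` is an admissible
monomorphism (a pushout of `0 ⟶ Z`), and so is the graph `(𝟙, g) : Y ⟶ Y ⊞ Z`, its composite
with a shear automorphism. Their intersection is exactly `f`, so the admissible intersection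
property makes `f` an admissible monomorphism; its exact pair ends in a cokernel of `f`,
which is isomorphic to `g`.
-/

namespace ExactStructure

variable {S : ExactStructure C}

theorem AdmMono.comp_iso {X Y Y' : C} {f : X ⟶ Y} (hf : S.AdmMono f)
    (e : Y ≅ Y') : S.AdmMono (f ≫ e.hom) := by
  obtain ⟨W, g, hE⟩ := hf
  exact ⟨W, e.inv ≫ g, S.iso_closed f g (f ≫ e.hom) (e.inv ≫ g)
    (Iso.refl X) e (Iso.refl W) (by simp) (by simp) hE⟩

theorem AdmMono.of_isPushout {X Y Z P : C} {f : X ⟶ Y} {h : X ⟶ Z}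
    {inl : Y ⟶ P} {inr : Z ⟶ P} (hf : S.AdmMono f) (hP : IsPushout f h inl inr) :
    S.AdmMono inr := by
  obtain ⟨P', inl', inr', hP', hinr'⟩ := S.pushout_admMono f hf h
  simpa using AdmMono.comp_iso (S := S) hinr' (hP'.isoIsPushout _ _ hP)

variable (S)

theorem admMono_of_isZero {X : C} (hX : IsZero X) (Z : C) (f : X ⟶ Z) : S.AdmMono f := by
  obtain ⟨W, f₀, hE⟩ := S.id_admEpi Z
  obtain ⟨w, ⟨hf₀⟩, -⟩ := S.kernel_cokernel f₀ (𝟙 Z) hE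
  have hW : IsZero W := KernelFork.IsLimit.isZero_of_mono hf₀
  exact ⟨Z, 𝟙 Z, S.iso_closed f₀ (𝟙 Z) f (𝟙 Z) (hW.iso hX) (Iso.refl Z) (Iso.refl Z)
    (hW.eq_of_src _ _) rfl hE⟩

theorem admMono_biprod_inl [HasZeroObject C] (Y Z : C) [HasBinaryBiproduct Y Z] :
    S.AdmMono (biprod.inl : Y ⟶ Y ⊞ Z) :=
  (S.admMono_of_isZero (isZero_zero C) Z 0).of_isPushout (IsPushout.of_has_biproduct Y Z).flip

theorem admMono_biprod_lift_id [HasZeroObject C] [HasBinaryBiproducts C] {Y Z : C}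
    (g : Y ⟶ Z) : S.AdmMono (biprod.lift (𝟙 Y) g) := by
  have hgraph : biprod.inl ≫ (Biprod.unipotentUpper g).hom = biprod.lift (𝟙 Y) g := by
    ext <;> simp
  exact hgraph ▸ (S.admMono_biprod_inl Y Z).comp_iso _

theorem E_of_isColimit_cokernelCofork {X Y Z W : C} {f : X ⟶ Y} {g' : Y ⟶ W} {g : Y ⟶ Z}
    (hE : S.E f g') {w : f ≫ g = 0} (hg : IsColimit (CokernelCofork.ofπ g w)) : S.E f g := by
  obtain ⟨w', -, ⟨hg'⟩⟩ := S.kernel_cokernel f g' hE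
  exact S.iso_closed f g' f g (Iso.refl X) (Iso.refl Y) (hg'.coconePointUniqueUpToIso hg)
    (by simp) (by simpa using hg'.comp_coconePointUniqueUpToIso_hom hg WalkingParallelPair.one) hE

end ExactStructure

theorem IsPullback.biprod_lift_id_inl_of_isLimit {X Y Z : C} [HasBinaryBiproduct Y Z]
    {f : X ⟶ Y} {g : Y ⟶ Z} {w : f ≫ g = 0} (hf : IsLimit (KernelFork.ofι f w)) :
    IsPullback f f (biprod.lift (𝟙 Y) g) biprod.inl := by
  have hcomponents : ∀ {T : C} {a b : T ⟶ Y}, a ≫ biprod.lift (𝟙 Y) g = b ≫ biprod.inl →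
      a ≫ g = 0 ∧ a = b := fun h ↦
    ⟨by simpa using h =≫ biprod.snd, by simpa using h =≫ biprod.fst⟩
  have : Mono f := mono_of_isLimit_fork hf
  refine ⟨⟨by ext <;> simp [w]⟩, ⟨PullbackCone.IsLimit.mk _
    (fun s ↦ (KernelFork.IsLimit.lift' hf s.fst (hcomponents s.condition).1).1)
    (fun s ↦ (KernelFork.IsLimit.lift' hf s.fst _).2)
    (fun s ↦ (KernelFork.IsLimit.lift' hf s.fst _).2.trans (hcomponents s.condition).2)
    (fun s m hm _ ↦ by
      rw [← cancel_mono f, hm]; exact (KernelFork.IsLimit.lift' hf s.fst _).2.symm)⟩⟩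

theorem stmt12_general [HasFiniteBiproducts C]
    (S : ExactStructure C)
    (hAI : ∀ ⦃A B C' D : C⦄ (a : A ⟶ B) (b : A ⟶ C') (c : B ⟶ D) (d : C' ⟶ D),
      S.AdmMono c → S.AdmMono d → IsPullback a b c d → S.AdmMono a ∧ S.AdmMono b) :
    ∀ ⦃X Y Z : C⦄ (f : X ⟶ Y) (g : Y ⟶ Z) (w : f ≫ g = 0),
      IsLimit (KernelFork.ofι f w) → IsColimit (CokernelCofork.ofπ g w) → S.E f g := by
  intro X Y Z f g w hf hg
  have : HasBinaryBiproducts C := hasBinaryBiproducts_of_finite_biproducts C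
  -- `f` is the intersection of the graph of `g` with the summand `Y` of `Y ⊞ Z`
  obtain ⟨⟨W, g', hE⟩, -⟩ := hAI f f _ _ (S.admMono_biprod_lift_id g) (S.admMono_biprod_inl Y Z)
    (IsPullback.biprod_lift_id_inl_of_isLimit hf)
  exact S.E_of_isColimit_cokernelCofork hE hg

/-- If an exact structure on a pre-abelian category has the admissible intersection property,
then every kernel-cokernel pair belongs to the exact structure. -/
theorem stmt12 [HasFiniteBiproducts C] [HasKernels C] [HasCokernels C]
    (S : ExactStructure C)
    (hAI : ∀ ⦃A B C' D : C⦄ (a : A ⟶ B) (b : A ⟶ C') (c : B ⟶ D) (d : C' ⟶ D),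
      S.AdmMono c → S.AdmMono d → IsPullback a b c d → S.AdmMono a ∧ S.AdmMono b) :
    ∀ ⦃X Y Z : C⦄ (f : X ⟶ Y) (g : Y ⟶ Z) (w : f ≫ g = 0),
      IsLimit (KernelFork.ofι f w) → IsColimit (CokernelCofork.ofπ g w) → S.E f g :=
  stmt12_general S hAI
end

section
/- Let A be a quasi-abelian category with the exact structure E consisting of all kernel-cokernel pairs. Then for any two admissible monomorphisms (kernels) c : B ↣ D and d : C ↣ D, in the pullback square of c and d the morphisms a : A → B and b : A → C are again kernels. In particular A has admissible intersections. -/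
open CategoryTheory CategoryTheory.Limits

universe v u

namespace CategoryTheory.IsPullback

variable {C : Type u} [Category.{v} C] [HasZeroMorphisms C]
  {A B C' D : C} {a : A ⟶ B} {b : A ⟶ C'} {c : B ⟶ D} {d : C' ⟶ D}

/- If `d = ker g`, then `a = ker (c ≫ g)`: a map `t` with `t ≫ c ≫ g = 0` factors as
`t ≫ c = s ≫ d`, and the pair `(t, s)` then factors through the pullback. -/
theorem isKernelMorphism_fst (hPB : IsPullback a b c d) (hd : IsKernelMorphism d) :
    IsKernelMorphism a := by
  obtain ⟨W, g, w, ⟨hd⟩⟩ := hd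
  have : Mono d := mono_of_isLimit_fork hd
  have : Mono a := hPB.mono_fst_of_mono
  refine ⟨W, c ≫ g, by rw [reassoc_of% hPB.w, w, comp_zero], ⟨?_⟩⟩
  refine KernelFork.IsLimit.ofι' a _ fun t ht => ?_
  obtain ⟨s, hs⟩ := KernelFork.IsLimit.lift' hd (t ≫ c) (by rwa [Category.assoc])
  exact ⟨hPB.lift t s hs.symm, hPB.lift_fst t s hs.symm⟩

theorem isKernelMorphism_snd (hPB : IsPullback a b c d) (hc : IsKernelMorphism c) :
    IsKernelMorphism b :=
  hPB.flip.isKernelMorphism_fst hc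

end CategoryTheory.IsPullback

theorem stmt13_general {C : Type u} [Category.{v} C] [Preadditive C]
    ⦃A B C' D : C⦄ (c : B ⟶ D) (d : C' ⟶ D) (hc : IsKernelMorphism c)
    (hd : IsKernelMorphism d) (a : A ⟶ B) (b : A ⟶ C') (hPB : IsPullback a b c d) :
    IsKernelMorphism a ∧ IsKernelMorphism b :=
  ⟨hPB.isKernelMorphism_fst hd, hPB.isKernelMorphism_snd hc⟩

/-- In a quasi-abelian category, for any two kernels (= admissible monomorphisms for the
exact structure of all kernel-cokernel pairs) `c : B ⟶ D` and `d : C' ⟶ D`, in the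
pullback square of `c` and `d` both projections are again kernels: quasi-abelian
categories have admissible intersections. -/
theorem stmt13 {C : Type u} [Category.{v} C] [Preadditive C] [HasFiniteBiproducts C]
    [HasKernels C] [HasCokernels C]
    (hLQA : ∀ ⦃W X Y Z : C⦄ (a : W ⟶ X) (b : W ⟶ Y) (c : X ⟶ Z) (d : Y ⟶ Z),
      IsPullback a b c d → IsCokernelMorphism d → IsCokernelMorphism a)
    (hRQA : ∀ ⦃W X Y Z : C⦄ (f : W ⟶ X) (g : W ⟶ Y) (inl : X ⟶ Z) (inr : Y ⟶ Z),
      IsPushout f g inl inr → IsKernelMorphism f → IsKernelMorphism inr)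
    ⦃A B C' D : C⦄ (c : B ⟶ D) (d : C' ⟶ D) (hc : IsKernelMorphism c)
    (hd : IsKernelMorphism d) (a : A ⟶ B) (b : A ⟶ C') (hPB : IsPullback a b c d) :
    IsKernelMorphism a ∧ IsKernelMorphism b :=
  stmt13_general (A := A) (B := B) (C' := C') (D := D) c d hc hd a b hPB
end

section
/- In a pre-abelian category, suppose f : A → B is a kernel and g : B → C is a cokernel with g ∘ f = 0 forming a kernel-cokernel pair. Then the morphisms (1,g)ᵀ : B → B ⊕ C and (1,0)ᵀ : B → B ⊕ C are both sections (split monomorphisms), and the pullback of (1,g)ᵀ along (1,0)ᵀ is given by the square with both pullback projections equal to f. -/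
open CategoryTheory CategoryTheory.Limits

universe v u

/-!
A square over `(1,g)ᵀ` and `(1,h)ᵀ` commutes exactly when its two legs agree and equalize `g`
and `h`; so the pullback of `(1,g)ᵀ` along `(1,h)ᵀ` is the equalizer of `g` and `h`, which for
`h = 0` is the kernel `f` of `g`. Both maps are split by the first projection.
-/

namespace CategoryTheory.Limits

variable {𝒞 : Type u} [Category.{v} 𝒞] [HasZeroMorphisms 𝒞]

theorem isSplitMono_biprod_lift_id {X Y : 𝒞} [HasBinaryBiproduct X Y] (g : X ⟶ Y) :
    IsSplitMono (biprod.lift (𝟙 X) g) :=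
  IsSplitMono.mk' ⟨biprod.fst, by simp⟩

theorem biprod.lift_id_comp_eq_iff {W X Y : 𝒞} [HasBinaryBiproduct X Y] {a b : W ⟶ X}
    {g h : X ⟶ Y} :
    a ≫ biprod.lift (𝟙 X) g = b ≫ biprod.lift (𝟙 X) h ↔ a = b ∧ a ≫ g = b ≫ h := by
  constructor
  · intro e
    exact ⟨by simpa using e =≫ biprod.fst, by simpa using e =≫ biprod.snd⟩
  · rintro ⟨rfl, e⟩
    ext <;> simp [e]

theorem isPullback_biprod_lift_id_of_isLimit_fork {X Y Z : 𝒞} [HasBinaryBiproduct Y Z]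
    (f : X ⟶ Y) (g h : Y ⟶ Z) (w : f ≫ g = f ≫ h) (hf : IsLimit (Fork.ofι f w)) :
    IsPullback f f (biprod.lift (𝟙 Y) g) (biprod.lift (𝟙 Y) h) := by
  have comm : f ≫ biprod.lift (𝟙 Y) g = f ≫ biprod.lift (𝟙 Y) h :=
    biprod.lift_id_comp_eq_iff.mpr ⟨rfl, w⟩
  have hmono : Mono f := mono_of_isLimit_fork hf
  refine ⟨⟨comm⟩, ⟨PullbackCone.IsLimit.mk comm
    (fun s => Fork.IsLimit.lift hf s.fst ?_) (fun s => ?_) (fun s => ?_) (fun s m hm _ => ?_)⟩⟩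
  · obtain ⟨e, eg⟩ := biprod.lift_id_comp_eq_iff.mp s.condition
    rwa [← e] at eg
  · exact Fork.IsLimit.lift_ι' hf _ _
  · exact (Fork.IsLimit.lift_ι' hf _ _).trans (biprod.lift_id_comp_eq_iff.mp s.condition).1
  · rw [← cancel_mono f, hm]
    exact (Fork.IsLimit.lift_ι' hf _ _).symm

end CategoryTheory.Limits

theorem stmt15_general {𝒞 : Type u} [Category.{v} 𝒞] [Preadditive 𝒞] [HasBinaryBiproducts 𝒞]
    {A B C : 𝒞} (f : A ⟶ B) (g : B ⟶ C) (w : f ≫ g = 0)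
    (hker : IsLimit (KernelFork.ofι f w)) :
    IsSplitMono (biprod.lift (𝟙 B) g) ∧ IsSplitMono (biprod.lift (𝟙 B) (0 : B ⟶ C)) ∧
    IsPullback f f (biprod.lift (𝟙 B) g) (biprod.lift (𝟙 B) (0 : B ⟶ C)) :=
  ⟨isSplitMono_biprod_lift_id g, isSplitMono_biprod_lift_id 0,
    isPullback_biprod_lift_id_of_isLimit_fork f g 0 (w.trans comp_zero.symm) hker⟩

/-- In a pre-abelian category, given a kernel-cokernel pair `(f, g)`, the morphisms
`(1,g)ᵀ : B ⟶ B ⊞ C` and `(1,0)ᵀ : B ⟶ B ⊞ C` are sections (split monomorphisms), and the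
pullback of `(1,g)ᵀ` along `(1,0)ᵀ` is the square whose two projections are both `f`. -/
theorem stmt15 {𝒞 : Type u} [Category.{v} 𝒞] [Preadditive 𝒞] [HasFiniteBiproducts 𝒞] [HasBinaryBiproducts 𝒞]
    [HasKernels 𝒞] [HasCokernels 𝒞]
    {A B C : 𝒞} (f : A ⟶ B) (g : B ⟶ C) (w : f ≫ g = 0)
    (hker : IsLimit (KernelFork.ofι f w)) (hcoker : IsColimit (CokernelCofork.ofπ g w)) :
    IsSplitMono (biprod.lift (𝟙 B) g) ∧ IsSplitMono (biprod.lift (𝟙 B) (0 : B ⟶ C)) ∧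
    IsPullback f f (biprod.lift (𝟙 B) g) (biprod.lift (𝟙 B) (0 : B ⟶ C)) :=
  stmt15_general f g w hker
end

section
/- In a pre-abelian category with enough projectives (for every object A there is an epimorphism P → A with P projective), epimorphisms are stable under pullback, i.e., the category is left integral. -/
open CategoryTheory CategoryTheory.Limits

universe v u

/-- By projectivity `q ≫ f` lifts through `g`, so `q` lifts through the pullback and hence
factors through `fst`. -/
theorem CategoryTheory.IsPullback.epi_fst_of_projective_cover {C : Type u} [Category.{v} C]
    {W X Y Z P : C} {fst : W ⟶ X} {snd : W ⟶ Y} {f : X ⟶ Z} {g : Y ⟶ Z}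
    (h : IsPullback fst snd f g) [Epi g] (q : P ⟶ X) [Epi q] [Projective P] : Epi fst :=
  have hq : h.lift q (Projective.factorThru (q ≫ f) g) (by simp) ≫ fst = q := h.lift_fst _ _ _
  epi_of_epi_fac hq

theorem stmt17_general {C : Type u} [Category.{v} C]
    (hEnough : ∀ A : C, ∃ (P : C) (p : P ⟶ A), Epi p ∧ Projective P) :
    ∀ ⦃W X Y Z : C⦄ (a : W ⟶ X) (b : W ⟶ Y) (c : X ⟶ Z) (d : Y ⟶ Z),
      IsPullback a b c d → Epi d → Epi a := by
  intro W X Y Z a b c d hpb hd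
  obtain ⟨P, q, hq, hP⟩ := hEnough X
  exact hpb.epi_fst_of_projective_cover q

/-- A pre-abelian category with enough projectives is left integral:
epimorphisms are stable under pullback. -/
theorem stmt17 {C : Type u} [Category.{v} C] [Preadditive C] [HasFiniteBiproducts C]
    [HasKernels C] [HasCokernels C]
    (hEnough : ∀ A : C, ∃ (P : C) (p : P ⟶ A), Epi p ∧ Projective P) :
    ∀ ⦃W X Y Z : C⦄ (a : W ⟶ X) (b : W ⟶ Y) (c : X ⟶ Z) (d : Y ⟶ Z),
      IsPullback a b c d → Epi d → Epi a :=
  stmt17_general hEnough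
end
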